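/- There exists a finite group G such that the set {x ∈ G : for every y ∈ G, ⟨x,y⟩ is supersoluble} is not equal (as a set) to the intersection of all supersoluble-maximal subgroups of G; that is, the class 𝔘 of finite supersoluble groups is not regular. -/

import Mathlib

universe u

/-- The factor group `B / A` is cyclic, for subgroups `A ≤ B` of an ambient group
with `A` normal in the ambient group. -/
def CyclicFactor {X : Type u} [Group X] (A B : Subgroup X) (hA : A.Normal) : Prop :=
  letI : (A.subgroupOf B).Normal := hA.subgroupOf B
  IsCyclic (↥B ⧸ A.subgroupOf B)

/-- `X` is supersoluble: there is a chain `1 = H₀ ≤ H₁ ≤ … ≤ H_k = X` of subgroups,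
each normal in `X`, with all factors `H_i / H_{i-1}` cyclic. -/
def IsSupersoluble (X : Type u) [Group X] : Prop :=
  ∃ (k : ℕ) (H : Fin (k + 1) → Subgroup X) (hnorm : ∀ i, (H i).Normal),
    H 0 = ⊥ ∧ H (Fin.last k) = ⊤ ∧ (∀ i : Fin k, H i.castSucc ≤ H i.succ) ∧
    ∀ i : Fin k, CyclicFactor (H i.castSucc) (H i.succ) (hnorm i.castSucc)

/-!
The counterexample is `G = V ⋊ Q₈` with `V = 𝔽₅²`, on which `Q₈` acts faithfully and
irreducibly.

Every element of `Q₈` lies in a cyclic subgroup `⟨q⟩` of order 4, and `q` has an eigenline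
`L ≤ V` because `-1 = 2²` is a square in `𝔽₅`; so `V ⋊ ⟨q⟩` is supersoluble, via the chain
`1 < L < V < V ⋊ ⟨q²⟩ < V ⋊ ⟨q⟩` of prime indices. Hence `⟨x, y⟩ ≤ V ⋊ ⟨y.right⟩` is
supersoluble for every `x ∈ V` and every `y`.

On the other hand, a nontrivial normal subgroup of `G` contains a nontrivial commutator
`[v, g] ∈ V`, hence all of `V` by irreducibility, so it is not cyclic and `G` is not
supersoluble. The same irreducibility argument shows that `Q₈` is supersoluble-maximal: a
subgroup properly containing it contains a nonzero vector, hence `V`, hence is `G`. Thus a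
nonzero `x₀ ∈ V` lies in the first set but not in `Q₈`.
-/

section Supersoluble

variable {X Y : Type u} [Group X] [Group Y]

theorem Subgroup.relIndex_eq_card_div {A B : Subgroup X} (hAB : A ≤ B) (hA : Nat.card A ≠ 0) :
    A.relIndex B = Nat.card B / Nat.card A := by
  have h := Subgroup.relIndex_mul_relIndex ⊥ A B bot_le hAB
  rw [Subgroup.relIndex_bot_left, Subgroup.relIndex_bot_left] at h
  exact (Nat.div_eq_of_eq_mul_right (Nat.pos_of_ne_zero hA) h.symm).symm

theorem Subgroup.card_comap_of_surjective {f : X →* Y} (hf : Function.Surjective f)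
    (K : Subgroup Y) : Nat.card (K.comap f) = Nat.card f.ker * Nat.card K := by
  have h := Subgroup.relIndex_mul_relIndex ⊥ f.ker (K.comap f) bot_le (MonoidHom.ker_le_comap f K)
  rwa [Subgroup.relIndex_bot_left, Subgroup.relIndex_bot_left, Subgroup.relIndex_ker,
    Subgroup.map_comap_eq_self_of_surjective hf, eq_comm] at h

theorem CyclicFactor.comap (f : Y →* X) {A B : Subgroup X} (hA : A.Normal)
    (h : CyclicFactor A B hA) : CyclicFactor (A.comap f) (B.comap f) (hA.comap f) := by
  have : (A.subgroupOf B).Normal := hA.subgroupOf B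
  have : ((A.comap f).subgroupOf (B.comap f)).Normal := (hA.comap f).subgroupOf _
  have : IsCyclic (↥B ⧸ A.subgroupOf B) := h
  let ψ := (QuotientGroup.mk' (A.subgroupOf B)).comp (f.subgroupComap B)
  have hker : ψ.ker = (A.comap f).subgroupOf (B.comap f) := by
    ext y
    exact QuotientGroup.eq_one_iff (f.subgroupComap B y)
  exact isCyclic_of_injective ((QuotientGroup.kerLift ψ).comp
      (QuotientGroup.quotientMulEquivOfEq hker.symm).toMonoidHom)
    ((QuotientGroup.kerLift_injective ψ).comp (MulEquiv.injective _))

theorem IsSupersoluble.of_injective (f : Y →* X) (hf : Function.Injective f)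
    (hX : IsSupersoluble X) : IsSupersoluble Y := by
  obtain ⟨k, H, hnorm, h0, hlast, hmono, hcyc⟩ := hX
  refine ⟨k, fun i => (H i).comap f, fun i => (hnorm i).comap f, ?_, ?_,
    fun i => Subgroup.comap_mono (hmono i), fun i => (hcyc i).comap f _⟩
  · simp only [h0, MonoidHom.comap_bot, (MonoidHom.ker_eq_bot_iff f).mpr hf]
  · simp only [hlast, Subgroup.comap_top]

theorem IsSupersoluble.of_mulEquiv (e : Y ≃* X) (hX : IsSupersoluble X) : IsSupersoluble Y :=
  hX.of_injective e.toMonoidHom e.injective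

theorem IsSupersoluble.of_le {S T : Subgroup X} (h : S ≤ T) (hT : IsSupersoluble T) :
    IsSupersoluble S :=
  hT.of_injective (Subgroup.inclusion h) (Subgroup.inclusion_injective h)

theorem CyclicFactor.isCyclic_of_bot {B : Subgroup X} (h : CyclicFactor ⊥ B Subgroup.normal_bot) :
    IsCyclic B := by
  have : ((⊥ : Subgroup X).subgroupOf B).Normal := Subgroup.normal_bot.subgroupOf B
  have : IsCyclic (↥B ⧸ (⊥ : Subgroup X).subgroupOf B) := h
  refine isCyclic_of_injective (QuotientGroup.mk' ((⊥ : Subgroup X).subgroupOf B)) ?_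
  rw [← MonoidHom.ker_eq_bot_iff, QuotientGroup.ker_mk', Subgroup.bot_subgroupOf]

theorem IsSupersoluble.exists_normal_isCyclic [Nontrivial X] (hX : IsSupersoluble X) :
    ∃ N : Subgroup X, N.Normal ∧ N ≠ ⊥ ∧ IsCyclic N := by
  obtain ⟨k, H, hnorm, h0, hlast, -, hcyc⟩ := hX
  by_contra! hnone
  have hbot : ∀ i, H i = ⊥ := by
    refine Fin.induction h0 fun i hi => ?_
    by_contra hne
    have hcyc := hcyc i
    simp only [hi] at hcyc
    exact hnone _ (hnorm i.succ) hne hcyc.isCyclic_of_bot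
  exact bot_ne_top ((hbot (Fin.last k)).symm.trans hlast)

theorem cyclicFactor_of_relIndex_prime {A B : Subgroup X} (hA : A.Normal)
    (hp : (A.relIndex B).Prime) : CyclicFactor A B hA := by
  have : (A.subgroupOf B).Normal := hA.subgroupOf B
  have : Fact (A.subgroupOf B).index.Prime := ⟨hp⟩
  exact isCyclic_of_prime_card (Subgroup.index_eq_card _).symm

theorem IsSupersoluble.of_chain {H : Subgroup X} {k : ℕ} (C : Fin (k + 1) → Subgroup X)
    (hC : Monotone C) (h0 : C 0 = ⊥) (hk : C (Fin.last k) = H)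
    (hconj : ∀ i, ∀ h ∈ H, ∀ c ∈ C i, h * c * h⁻¹ ∈ C i)
    (hprime : ∀ i : Fin k, (Nat.card (C i.succ) / Nat.card (C i.castSucc)).Prime) :
    IsSupersoluble H := by
  have hle (i : Fin (k + 1)) : C i ≤ H := hk ▸ hC (Fin.le_last i)
  refine ⟨k, fun i => (C i).subgroupOf H,
    fun i => (Subgroup.normal_subgroupOf_iff (hle i)).mpr fun c h hc hh => hconj i h hh c hc,
    by simp [h0], by simp [hk], fun i => Subgroup.subgroupOf_mono H (hC i.castSucc_le_succ),
    fun i => cyclicFactor_of_relIndex_prime _ ?_⟩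
  have hcard : Nat.card (C i.castSucc) ≠ 0 :=
    fun h => Nat.not_prime_zero (by simpa [h] using hprime i)
  rw [Subgroup.relIndex_subgroupOf (hle _),
    Subgroup.relIndex_eq_card_div (hC i.castSucc_le_succ) hcard]
  exact hprime i

end Supersoluble

namespace SemidirectProduct

variable {N H : Type*} [CommGroup N] [Group H] {φ : H →* MulAut N}

theorem conj_inl (g : N ⋊[φ] H) (n : N) : g * inl n * g⁻¹ = inl (φ g.right n) := by
  ext <;> simp [mul_comm]

theorem exists_inl_mem_of_normal (hφ : Function.Injective φ) {K : Subgroup (N ⋊[φ] H)}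
    (hK : K.Normal) (hne : K ≠ ⊥) : ∃ n ≠ 1, inl n ∈ K := by
  obtain ⟨g, hgK, hg⟩ := K.bot_or_exists_ne_one.resolve_left hne
  by_cases hr : g.right = 1
  · refine ⟨g.left, fun h => hg ?_, ?_⟩
    · ext <;> simp [h, hr]
    · convert hgK
      ext <;> simp [hr]
  · obtain ⟨n, hn⟩ : ∃ n, φ g.right n ≠ n := by
      by_contra! h
      exact hr (hφ (by ext n; simpa using h n))
    refine ⟨n / φ g.right n, div_ne_one.mpr hn.symm, ?_⟩
    convert K.mul_mem (hK.conj_mem g hgK (inl n)) (K.inv_mem hgK) using 1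
    calc inl (n / φ g.right n) = inl n * inl (φ g.right n⁻¹) := by simp [div_eq_mul_inv]
      _ = inl n * (g * inl n⁻¹ * g⁻¹) := by rw [conj_inl]
      _ = inl n * g * (inl n)⁻¹ * g⁻¹ := by simp [mul_assoc]

end SemidirectProduct

namespace SupersolubleNotRegular

open QuaternionGroup SemidirectProduct Subgroup

/-- `a 1` acts as `diag(2, 3)` and `xa 0` as `(x, y) ↦ (-y, x)`, and `xa i = xa 0 * a i`;
the relations of `Q₈` hold because `2 * 3 = 1` and `2 ^ 2 = -1` in `ZMod 5`. -/
def quatAct : QuaternionGroup 2 → ZMod 5 × ZMod 5 → ZMod 5 × ZMod 5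
  | a i, v => (2 ^ i.val * v.1, 3 ^ i.val * v.2)
  | xa i, v => (-(3 ^ i.val * v.2), 2 ^ i.val * v.1)

abbrev V : Type := Multiplicative (ZMod 5 × ZMod 5)

instance : MulDistribMulAction (QuaternionGroup 2) V where
  smul q v := .ofAdd (quatAct q v.toAdd)
  one_smul := by decide
  mul_smul := by decide
  smul_mul := by decide
  smul_one := by decide

def e₁ : V := .ofAdd (1, 0)

theorem exists_pow_mul_smul_pow_eq_e₁ (w : V) (hw : w ≠ 1) :
    ∃ q : QuaternionGroup 2, ∃ m n : Fin 5, w ^ (m : ℕ) * (q • w) ^ (n : ℕ) = e₁ := by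
  revert w; decide

theorem exists_eq_e₁_pow_mul_smul_pow (u : V) :
    ∃ m n : Fin 5, u = e₁ ^ (m : ℕ) * ((xa 0 : QuaternionGroup 2) • e₁) ^ (n : ℕ) := by
  revert u; decide

abbrev G : Type := V ⋊[MulDistribMulAction.toMulAut (QuaternionGroup 2) V] QuaternionGroup 2

instance : Finite G := Finite.of_equiv _ equivProd.symm

instance : Nontrivial G := inr_injective.nontrivial

theorem toMulAut_injective :
    Function.Injective (MulDistribMulAction.toMulAut (QuaternionGroup 2) V) := by
  have hmoved : ∀ q : QuaternionGroup 2, q • (.ofAdd (1, 1) : V) = .ofAdd (1, 1) → q = 1 := by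
    decide
  exact (injective_iff_map_eq_one _).mpr fun q hq => hmoved q (DFunLike.congr_fun hq _)

theorem eq_top_of_smul_mem {S : Subgroup V} (hS : ∀ q : QuaternionGroup 2, ∀ v ∈ S, q • v ∈ S)
    (hne : S ≠ ⊥) : S = ⊤ := by
  obtain ⟨w, hwS, hw⟩ := S.bot_or_exists_ne_one.resolve_left hne
  have he₁ : e₁ ∈ S := by
    obtain ⟨q, m, n, h⟩ := exists_pow_mul_smul_pow_eq_e₁ w hw
    exact h ▸ S.mul_mem (S.pow_mem hwS m) (S.pow_mem (hS q w hwS) n)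
  refine eq_top_iff.mpr fun u _ => ?_
  obtain ⟨m, n, rfl⟩ := exists_eq_e₁_pow_mul_smul_pow u
  exact S.mul_mem (S.pow_mem he₁ m) (S.pow_mem (hS _ _ he₁) n)

theorem range_inl_le {K : Subgroup G} (hK : ∀ q, ∀ g ∈ K, inr q * g * (inr q)⁻¹ ∈ K)
    {v : V} (hv : v ≠ 1) (hvK : inl v ∈ K) : (inl : V →* G).range ≤ K := by
  have htop : K.comap inl = ⊤ := by
    refine eq_top_of_smul_mem (fun q u hu => ?_) fun hbot => hv ?_
    · simpa [conj_inl] using hK q _ hu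
    · simpa [hbot] using show v ∈ K.comap inl from hvK
  rw [MonoidHom.range_eq_map, map_le_iff_le_comap, htop]

theorem not_isCyclic_V : ¬ IsCyclic V := fun h => by
  rw [isCyclic_multiplicative_iff] at h
  simpa using coprime_card_of_isAddCyclic_prod (ZMod 5) (ZMod 5)

theorem not_isSupersoluble : ¬ IsSupersoluble G := by
  intro hG
  obtain ⟨K, hK, hne, hcyc⟩ := hG.exists_normal_isCyclic
  obtain ⟨v, hv, hvK⟩ := exists_inl_mem_of_normal toMulAut_injective hK hne
  have hVK := range_inl_le (fun q g hg => hK.conj_mem g hg (inr q)) hv hvK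
  have : IsCyclic (inl : V →* G).range := Subgroup.isCyclic_of_le hVK
  exact not_isCyclic_V (isCyclic_of_injective (inl : V →* G).rangeRestrict
    ((inl : V →* G).rangeRestrict_injective_iff.mpr inl_injective))

theorem orderOf_a_two : orderOf (a 2 : QuaternionGroup 2) = 2 :=
  orderOf_eq_prime (by decide) (by decide)

theorem orderOf_of_sq_eq_a_two {q : QuaternionGroup 2} (hq : q ^ 2 = a 2) : orderOf q = 4 :=
  orderOf_eq_prime_pow (p := 2) (n := 1) (by rw [pow_one, hq]; decide)
    (by rw [show 2 ^ (1 + 1) = 2 * 2 from rfl, pow_mul, hq]; decide)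

theorem zpowers_a_two_normal : (zpowers (a 2 : QuaternionGroup 2)).Normal := by
  have hcentral : ∀ g : QuaternionGroup 2, g * a 2 * g⁻¹ = a 2 := by decide
  refine ⟨fun n hn g => ?_⟩
  obtain ⟨k, rfl⟩ := mem_zpowers_iff.mp hn
  rw [← conj_zpow, hcentral]
  exact zpow_mem (mem_zpowers _) k

theorem isSupersoluble_quaternionGroup : IsSupersoluble (QuaternionGroup 2) := by
  have hcard : Nat.card (QuaternionGroup 2) = 8 := by
    rw [Nat.card_eq_fintype_card, QuaternionGroup.card]
  have hindex : (zpowers (a 1 : QuaternionGroup 2)).index = 2 := by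
    have := card_mul_index (zpowers (a 1 : QuaternionGroup 2))
    rw [Nat.card_zpowers, orderOf_a_one, hcard] at this
    omega
  let C : Fin 4 → Subgroup (QuaternionGroup 2) := ![⊥, zpowers (a 2), zpowers (a 1), ⊤]
  have hcardC (i : Fin 4) : Nat.card (C i) = ![1, 2, 4, 8] i := by
    fin_cases i
    · exact card_bot
    · exact (Nat.card_zpowers _).trans orderOf_a_two
    · exact (Nat.card_zpowers _).trans orderOf_a_one
    · exact card_top.trans hcard
  have hsuper : IsSupersoluble (⊤ : Subgroup (QuaternionGroup 2)) := by
    refine IsSupersoluble.of_chain C (Fin.monotone_iff_le_succ.mpr fun i => ?_) rfl rfl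
      (fun i h _ => ?_) fun i => ?_
    · fin_cases i
      exacts [bot_le, zpowers_le.mpr (mem_zpowers_iff.mpr ⟨2, by decide⟩), le_top]
    · fin_cases i
      exacts [fun c hc => by simp_all [C], fun c hc => zpowers_a_two_normal.conj_mem c hc h,
        fun c hc => (normal_of_index_eq_two hindex).conj_mem c hc h, fun c _ => mem_top _]
    · rw [hcardC, hcardC]
      fin_cases i <;> decide
  exact hsuper.of_mulEquiv topEquiv.symm

def eigenline (q : QuaternionGroup 2) : Subgroup V :=
  (MulDistribMulAction.toMonoidHom V q).eqLocus (powMonoidHom 2)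

theorem mem_eigenline {q : QuaternionGroup 2} {v : V} : v ∈ eigenline q ↔ q • v = v ^ 2 :=
  Iff.rfl

instance (q : QuaternionGroup 2) : DecidablePred (· ∈ eigenline q) :=
  fun _ => decidable_of_iff _ mem_eigenline.symm

theorem card_eigenline {q : QuaternionGroup 2} (hq : q ^ 2 = a 2) : Nat.card (eigenline q) = 5 := by
  rw [Nat.card_eq_fintype_card]
  revert q
  decide

theorem smul_mem_eigenline {q r : QuaternionGroup 2} (hqr : Commute q r) {v : V}
    (hv : v ∈ eigenline q) : r • v ∈ eigenline q := by
  rw [mem_eigenline] at hv ⊢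
  rw [smul_smul, hqr.eq, ← smul_smul, hv, smul_pow']

theorem card_V : Nat.card V = 25 := by
  rw [Nat.card_eq_fintype_card]; rfl

theorem card_range_inl : Nat.card (inl : V →* G).range = 25 := by
  rw [MonoidHom.range_eq_map, card_map_of_injective inl_injective, card_top, card_V]

theorem card_comap_rightHom (K : Subgroup (QuaternionGroup 2)) :
    Nat.card (K.comap (rightHom : G →* _)) = 25 * Nat.card K := by
  rw [card_comap_of_surjective rightHom_surjective, ← range_inl_eq_ker_rightHom, card_range_inl]

theorem range_inl_normal : (inl : V →* G).range.Normal := by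
  rw [range_inl_eq_ker_rightHom]
  exact MonoidHom.normal_ker _

theorem isSupersoluble_comap_zpowers {q : QuaternionGroup 2} (hq : q ^ 2 = a 2) :
    IsSupersoluble ((zpowers q).comap (rightHom : G →* _)) := by
  let C : Fin 5 → Subgroup G := ![⊥, (eigenline q).map inl, (inl : V →* G).range,
    (zpowers (a 2)).comap rightHom, (zpowers q).comap rightHom]
  have hcard (i : Fin 5) : Nat.card (C i) = ![1, 5, 25, 50, 100] i := by
    fin_cases i
    · exact card_bot
    · exact (card_map_of_injective inl_injective).trans (card_eigenline hq)
    · exact card_range_inl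
    · exact (card_comap_rightHom _).trans (by rw [Nat.card_zpowers, orderOf_a_two]; rfl)
    · exact (card_comap_rightHom _).trans (by rw [Nat.card_zpowers, orderOf_of_sq_eq_a_two hq]; rfl)
  refine IsSupersoluble.of_chain C (Fin.monotone_iff_le_succ.mpr fun i => ?_) rfl rfl
    (fun i h hh => ?_) fun i => ?_
  · fin_cases i
    · exact bot_le
    · exact map_le_range _ _
    · exact range_inl_eq_ker_rightHom.le.trans (MonoidHom.ker_le_comap _ _)
    · exact comap_mono (zpowers_le.mpr ⟨2, by simpa using hq⟩)
  · fin_cases i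
    · exact fun c hc => by simp_all [C]
    · rintro _ ⟨v, hv, rfl⟩
      obtain ⟨k, hk⟩ := mem_zpowers_iff.mp hh
      have hcomm : Commute q (rightHom h) := hk ▸ (Commute.refl q).zpow_right k
      rw [conj_inl]
      exact mem_map_of_mem _ (smul_mem_eigenline hcomm hv)
    · exact fun c hc => range_inl_normal.conj_mem c hc h
    · exact fun c hc => (zpowers_a_two_normal.comap rightHom).conj_mem c hc h
    · exact fun c hc => mul_mem (mul_mem hh hc) (inv_mem hh)
  · rw [hcard, hcard]
    fin_cases i <;> decide

def x₀ : G := inl e₁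

theorem isSupersoluble_closure_x₀ (y : G) : IsSupersoluble (closure {x₀, y}) := by
  have hcover : ∀ r : QuaternionGroup 2, ∃ q, q ^ 2 = a 2 ∧ ∃ k : Fin 4, q ^ (k : ℕ) = r := by
    decide
  obtain ⟨q, hq, k, hk⟩ := hcover y.right
  refine (isSupersoluble_comap_zpowers hq).of_le ((closure_le _).mpr
    (Set.insert_subset_iff.mpr ⟨?_, Set.singleton_subset_iff.mpr ?_⟩))
  · simp [x₀]
  · show y.right ∈ zpowers q
    exact hk ▸ pow_mem (mem_zpowers q) k

theorem x₀_not_mem_range_inr : x₀ ∉ (inr : QuaternionGroup 2 →* G).range := by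
  rintro ⟨q, hq⟩
  exact (by decide : e₁ ≠ 1) (congrArg SemidirectProduct.left hq).symm

theorem isSupersoluble_range_inr : IsSupersoluble (inr : QuaternionGroup 2 →* G).range :=
  isSupersoluble_quaternionGroup.of_mulEquiv (MonoidHom.ofInjective inr_injective).symm

theorem eq_range_inr_of_le {K : Subgroup G} (hK : IsSupersoluble K)
    (hle : (inr : QuaternionGroup 2 →* G).range ≤ K) :
    K = (inr : QuaternionGroup 2 →* G).range := by
  by_contra hne
  obtain ⟨g, hgK, hg⟩ := SetLike.exists_of_lt (lt_of_le_of_ne hle (Ne.symm hne))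
  have hinr (q : QuaternionGroup 2) : inr q ∈ K := hle ⟨q, rfl⟩
  have hleft : inl g.left ∈ K := by
    convert K.mul_mem hgK (K.inv_mem (hinr g.right))
    ext <;> simp
  have hne1 : g.left ≠ 1 := fun h => hg ⟨g.right, by ext <;> simp [h]⟩
  have hV := range_inl_le (fun q h hh => mul_mem (mul_mem (hinr q) hh) (inv_mem (hinr q)))
    hne1 hleft
  have htop : K = ⊤ := eq_top_iff.mpr fun x _ =>
    inl_left_mul_inr_right x ▸ mul_mem (hV ⟨_, rfl⟩) (hinr _)
  subst htop
  exact not_isSupersoluble (hK.of_mulEquiv topEquiv.symm)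

end SupersolubleNotRegular

theorem supersoluble_not_regular :
    ∃ (G : Type) (instG : Group G),
      letI := instG
      Finite G ∧
      {x : G | ∀ y : G, IsSupersoluble ↥(Subgroup.closure {x, y})} ≠
        ↑(sInf {H : Subgroup G | IsSupersoluble ↥H ∧
          ∀ K : Subgroup G, IsSupersoluble ↥K → H ≤ K → K = H}) := by
  open SupersolubleNotRegular in
  refine ⟨G, inferInstance, inferInstance, fun h => ?_⟩
  have hx : x₀ ∈ {x : G | ∀ y : G, IsSupersoluble ↥(Subgroup.closure {x, y})} :=
    isSupersoluble_closure_x₀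
  rw [h, SetLike.mem_coe, Subgroup.mem_sInf] at hx
  exact x₀_not_mem_range_inr
    (hx _ ⟨isSupersoluble_range_inr, fun K hK hle => eq_range_inr_of_le hK hle⟩)
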